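/- arXiv:2411.15358 — 6 statements merged into one kernel-verified Lean document; each statement's English description precedes it below -/
import Mathlib

section
/- Let E = ℂ² with basis e₁, e₂, equipped with the dendriform algebra structure Dend₂¹ given by the bilinear operations ≺, ≻ : E × E → E determined on basis elements by e₁ ≺ e₁ = e₁ and e₁ ≻ e₂ = e₂ (all other products of basis elements are 0). A linear operator P : E → E is a Rota–Baxter operator of weight 0 on (E, ≺, ≻) if and only if there exists t ∈ ℂ such that P(e₁) = t·e₂ and P(e₂) = 0. -/
/-!
Bilinearity identifies `≺` and `≻` with `u ≺ v = (u₁v₁, 0)` and `u ≻ v = (0, u₁v₂)`. Writing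
`P e₁ = (a, b)` and `P e₂ = (c, d)`, the weight-zero Rota–Baxter identity for `≺` at `(e₁, e₁)`
gives `a² = 2a²`; with `a = 0`, the one for `≻` at `(e₁, e₂)` gives `d² = 0`, and the one for `≺`
at `(e₂, e₂)` gives `c² = 0`. Conversely, if `P e₁ ∈ ℂ e₂` and `P e₂ = 0`, every term of both
identities vanishes: each `P u` has first coordinate `0`, and `u ≻ P v ∈ ℂ e₂` is killed by `P`.
-/

section
variable {R M : Type*} [CommRing R] [AddCommGroup M] [Module R M]

theorem LinearMap.apply_prod_eq (P : (R × R) →ₗ[R] M) (u : R × R) :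
    P u = u.1 • P (1, 0) + u.2 • P (0, 1) := by
  conv_lhs => rw [show u = u.1 • (1, 0) + u.2 • (0, 1) by ext <;> simp]
  simp only [map_add, map_smul]

theorem LinearMap.apply_prod_prod_eq (B : (R × R) →ₗ[R] (R × R) →ₗ[R] M) (u v : R × R) :
    B u v = (u.1 * v.1) • B (1, 0) (1, 0) + (u.1 * v.2) • B (1, 0) (0, 1)
      + (u.2 * v.1) • B (0, 1) (1, 0) + (u.2 * v.2) • B (0, 1) (0, 1) := by
  rw [B.apply_prod_eq u, LinearMap.add_apply, LinearMap.smul_apply, LinearMap.smul_apply,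
    (B (1, 0)).apply_prod_eq v, (B (0, 1)).apply_prod_eq v]
  simp only [smul_add, smul_smul]
  abel
end

namespace Dend21
variable {R : Type*} [CommRing R]

def left (u v : R × R) : R × R := (u.1 * v.1, 0)

def right (u v : R × R) : R × R := (0, u.1 * v.2)

theorem eq_left_of_basis (l : (R × R) →ₗ[R] (R × R) →ₗ[R] (R × R))
    (h11 : l (1, 0) (1, 0) = (1, 0)) (h12 : l (1, 0) (0, 1) = 0)
    (h21 : l (0, 1) (1, 0) = 0) (h22 : l (0, 1) (0, 1) = 0) (u v : R × R) :
    l u v = left u v := by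
  rw [l.apply_prod_prod_eq, h11, h12, h21, h22]
  ext <;> simp [left]

theorem eq_right_of_basis (r : (R × R) →ₗ[R] (R × R) →ₗ[R] (R × R))
    (h11 : r (1, 0) (1, 0) = 0) (h12 : r (1, 0) (0, 1) = (0, 1))
    (h21 : r (0, 1) (1, 0) = 0) (h22 : r (0, 1) (0, 1) = 0) (u v : R × R) :
    r u v = right u v := by
  rw [r.apply_prod_prod_eq, h11, h12, h21, h22]
  ext <;> simp [right]

theorem rotaBaxter_weight_zero_iff [IsReduced R] (P : (R × R) →ₗ[R] (R × R)) :
    (∀ u v : R × R, left (P u) (P v) = P (left (P u) v + left u (P v)) ∧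
        right (P u) (P v) = P (right (P u) v + right u (P v))) ↔
      ∃ t : R, P (1, 0) = (0, t) ∧ P (0, 1) = 0 := by
  obtain ⟨⟨a, b⟩, hPe₁⟩ : ∃ x, P (1, 0) = x := ⟨_, rfl⟩
  obtain ⟨⟨c, d⟩, hPe₂⟩ : ∃ x, P (0, 1) = x := ⟨_, rfl⟩
  have hP : ∀ u : R × R, P u = (u.1 * a + u.2 * c, u.1 * b + u.2 * d) := fun u => by
    rw [P.apply_prod_eq, hPe₁, hPe₂]; ext <;> simp
  rw [hPe₁, hPe₂]
  simp only [hP, left, right, Prod.ext_iff, Prod.fst_add, Prod.snd_add, Prod.fst_zero,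
    Prod.snd_zero, add_zero, zero_add, zero_mul]
  constructor
  · intro h
    have ha : a = 0 := by
      have := (h (1, 0) (1, 0)).1.1
      simp only [one_mul, zero_mul, add_zero, mul_one] at this
      exact eq_zero_of_pow_eq_zero (n := 2) (by linear_combination -this)
    subst ha
    have hd : d = 0 := by
      have := (h (1, 0) (0, 1)).2.2
      simp only [mul_zero, zero_mul, add_zero, one_mul, zero_add, mul_one] at this
      exact eq_zero_of_pow_eq_zero (n := 2) (by linear_combination -this)
    subst hd
    have hc : c = 0 := by
      have := (h (0, 1) (0, 1)).1.1
      simp only [mul_zero, one_mul, zero_add, zero_mul, add_zero] at this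
      exact eq_zero_of_pow_eq_zero (n := 2) (by linear_combination this)
    exact ⟨b, ⟨rfl, rfl⟩, hc, rfl⟩
  · rintro ⟨t, ⟨rfl, -⟩, rfl, rfl⟩ u v
    simp
end Dend21

theorem stmt_0
    (l r : (ℂ × ℂ) →ₗ[ℂ] (ℂ × ℂ) →ₗ[ℂ] (ℂ × ℂ))
    (P : (ℂ × ℂ) →ₗ[ℂ] (ℂ × ℂ))
    (e₁ e₂ : ℂ × ℂ)
    (he₁ : e₁ = (1, 0)) (he₂ : e₂ = (0, 1))
    (hl11 : l e₁ e₁ = e₁)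
    (hl12 : l e₁ e₂ = 0)
    (hl21 : l e₂ e₁ = 0)
    (hl22 : l e₂ e₂ = 0)
    (hr11 : r e₁ e₁ = 0)
    (hr12 : r e₁ e₂ = e₂)
    (hr21 : r e₂ e₁ = 0)
    (hr22 : r e₂ e₂ = 0) :
    (∀ u v : ℂ × ℂ,
        l (P u) (P v) = P (l (P u) v + l u (P v) + (0:ℂ) • l u v) ∧
        r (P u) (P v) = P (r (P u) v + r u (P v) + (0:ℂ) • l u v)) ↔
      (∃ t : ℂ, P e₁ = t • e₂ ∧ P e₂ = 0) := by
  subst he₁ he₂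
  have hl := Dend21.eq_left_of_basis l hl11 hl12 hl21 hl22
  have hr := Dend21.eq_right_of_basis r hr11 hr12 hr21 hr22
  simp only [hl, hr, zero_smul, add_zero, Prod.smul_mk, smul_eq_mul, mul_zero, mul_one]
  exact Dend21.rotaBaxter_weight_zero_iff P
end

section
/- Let E = ℂ² with basis e₁, e₂, equipped with the dendriform algebra structure Dend₂¹ given by the bilinear operations ≺, ≻ determined on basis elements by e₁ ≺ e₁ = e₁ and e₁ ≻ e₂ = e₂ (all other products of basis elements are 0). A linear operator P : E → E is a Rota–Baxter operator of weight 1 on (E, ≺, ≻) if and only if P = 0. -/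
/-!
In coordinates `x ≺ y = (x₁ y₁, 0)` and `x ≻ y = (0, x₁ y₂)`.
Write `p = P e₁` and `q = P e₂`. The `≺`-identity at `(e₂, e₂)` reads `(q₁², 0) = P 0`,
so `q₁ = 0`; the first coordinate of the `≻`-identity at `(e₁, e₁)` then gives `p₁ = 0`,
the `≺`-identity at `(e₁, e₁)` gives `p = 0`, and finally the `≻`-identity at `(e₁, e₂)`
reads `0 = q₂ • q`, so `q₂² = 0`.
-/

/-- As in the source, the weight term of the `≻`-identity is `w • (u ≺ v)`. -/
def IsRotaBaxterDend {R M : Type*} [CommSemiring R] [AddCommMonoid M] [Module R M]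
    (l r : M →ₗ[R] M →ₗ[R] M) (w : R) (P : M →ₗ[R] M) : Prop :=
  ∀ u v : M,
    l (P u) (P v) = P (l (P u) v + l u (P v) + w • l u v) ∧
    r (P u) (P v) = P (r (P u) v + r u (P v) + w • l u v)

theorem isRotaBaxterDend_zero {R M : Type*} [CommSemiring R] [AddCommMonoid M] [Module R M]
    (l r : M →ₗ[R] M →ₗ[R] M) (w : R) : IsRotaBaxterDend l r w 0 := by
  intro u v
  simp

section Coordinates

variable {R M : Type*} [CommSemiring R] [AddCommMonoid M] [Module R M]

theorem Prod.eq_fst_smul_add_snd_smul (z : R × R) :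
    z = z.1 • ((1 : R), (0 : R)) + z.2 • (0, 1) := by
  ext <;> simp

theorem LinearMap.prod_bilin_apply (B : R × R →ₗ[R] R × R →ₗ[R] M) (x y : R × R) :
    B x y = (x.1 * y.1) • B (1, 0) (1, 0) + (x.1 * y.2) • B (1, 0) (0, 1)
      + (x.2 * y.1) • B (0, 1) (1, 0) + (x.2 * y.2) • B (0, 1) (0, 1) := by
  conv_lhs => rw [x.eq_fst_smul_add_snd_smul, y.eq_fst_smul_add_snd_smul]
  simp only [map_add, map_smul, LinearMap.add_apply, LinearMap.smul_apply, smul_add, smul_smul]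
  rw [mul_comm y.1, mul_comm y.2, mul_comm y.1, mul_comm y.2]
  abel

theorem dend21_left_apply {l : R × R →ₗ[R] R × R →ₗ[R] R × R}
    (h11 : l (1, 0) (1, 0) = (1, 0)) (h12 : l (1, 0) (0, 1) = 0)
    (h21 : l (0, 1) (1, 0) = 0) (h22 : l (0, 1) (0, 1) = 0) (x y : R × R) :
    l x y = (x.1 * y.1, 0) := by
  rw [l.prod_bilin_apply, h11, h12, h21, h22]
  simp

theorem dend21_right_apply {r : R × R →ₗ[R] R × R →ₗ[R] R × R}
    (h11 : r (1, 0) (1, 0) = 0) (h12 : r (1, 0) (0, 1) = (0, 1))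
    (h21 : r (0, 1) (1, 0) = 0) (h22 : r (0, 1) (0, 1) = 0) (x y : R × R) :
    r x y = (0, x.1 * y.2) := by
  rw [r.prod_bilin_apply, h11, h12, h21, h22]
  simp

theorem eq_zero_of_isRotaBaxterDend_dend21 [IsReduced R]
    {l r : R × R →ₗ[R] R × R →ₗ[R] R × R}
    (hl : ∀ x y, l x y = (x.1 * y.1, 0)) (hr : ∀ x y, r x y = (0, x.1 * y.2))
    {P : R × R →ₗ[R] R × R} (hP : IsRotaBaxterDend l r 1 P) : P = 0 := by
  set p := P (1, 0) with hp
  set q := P (0, 1) with hq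
  have hP_apply (x : R × R) : P x = x.1 • p + x.2 • q := by
    conv_lhs => rw [x.eq_fst_smul_add_snd_smul]
    rw [map_add, map_smul, map_smul]
  have hq₁ : q.1 = 0 := by
    have h := congrArg Prod.fst (hP (0, 1) (0, 1)).1
    exact eq_zero_of_pow_eq_zero (n := 2) (by simpa [hl, hP_apply, sq] using h)
  have hp₁ : p.1 = 0 := by
    have h := congrArg Prod.fst (hP (1, 0) (1, 0)).2
    simpa [hl, hr, hP_apply, hq₁] using h.symm
  have hp₂ : p.2 = 0 := by
    have h := congrArg Prod.snd (hP (1, 0) (1, 0)).1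
    simpa [hl, hr, hP_apply, hp₁] using h.symm
  have hq₂ : q.2 = 0 := by
    have h := congrArg Prod.snd (hP (1, 0) (0, 1)).2
    exact eq_zero_of_pow_eq_zero (n := 2) (by simpa [hl, hr, hP_apply, hp₁, sq] using h.symm)
  ext <;> simp [← hp, ← hq, hp₁, hp₂, hq₁, hq₂]

end Coordinates

theorem stmt_1
    (l r : (ℂ × ℂ) →ₗ[ℂ] (ℂ × ℂ) →ₗ[ℂ] (ℂ × ℂ))
    (P : (ℂ × ℂ) →ₗ[ℂ] (ℂ × ℂ))
    (e₁ e₂ : ℂ × ℂ)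
    (he₁ : e₁ = (1, 0)) (he₂ : e₂ = (0, 1))
    (hl11 : l e₁ e₁ = e₁)
    (hl12 : l e₁ e₂ = 0)
    (hl21 : l e₂ e₁ = 0)
    (hl22 : l e₂ e₂ = 0)
    (hr11 : r e₁ e₁ = 0)
    (hr12 : r e₁ e₂ = e₂)
    (hr21 : r e₂ e₁ = 0)
    (hr22 : r e₂ e₂ = 0) :
    (∀ u v : ℂ × ℂ,
        l (P u) (P v) = P (l (P u) v + l u (P v) + (1:ℂ) • l u v) ∧
        r (P u) (P v) = P (r (P u) v + r u (P v) + (1:ℂ) • l u v)) ↔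
      (P = 0) := by
  subst he₁ he₂
  change IsRotaBaxterDend l r 1 P ↔ P = 0
  refine ⟨eq_zero_of_isRotaBaxterDend_dend21 ?_ ?_, ?_⟩
  · exact dend21_left_apply hl11 hl12 hl21 hl22
  · exact dend21_right_apply hr11 hr12 hr21 hr22
  · rintro rfl
    exact isRotaBaxterDend_zero l r 1
end

section
/- Let E = ℂ² with basis e₁, e₂, equipped with the dendriform algebra structure Dend₂¹ given by the bilinear operations ≺, ≻ determined on basis elements by e₁ ≺ e₁ = e₁ and e₁ ≻ e₂ = e₂ (all other products of basis elements are 0). A linear operator P : E → E is an averaging operator on (E, ≺, ≻) if and only if one of the following holds for some t ∈ ℂ: (i) P(e₁) = t·e₂ and P(e₂) = 0; (ii) P(e₁) = t·e₁ and P(e₂) = 0; (iii) P(e₁) = t·e₁ and P(e₂) = t·e₂ (i.e. P = t·id). -/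
/-!
Bilinearity reduces the two products to coordinates, `u ≺ v = (u₁ v₁, 0)` and
`u ≻ v = (0, u₁ v₂)`. Write `P e₁ = (a, b)` and `P e₂ = (c, d)`. The identity
`P e₂ ≺ P e₂ = P (e₂ ≺ P e₂)` reads `c² = 0`, and the remaining identities on basis vectors then
give `ab = bd = (a - d) d = 0`; conversely these equations turn every averaging identity into a
polynomial identity in the coordinates of `u` and `v`. Their solutions are the three families.
-/

section Coordinates

variable {R M : Type*} [CommSemiring R] [AddCommMonoid M] [Module R M]

theorem Prod.eq_fst_smul_add_snd_smul_s4 (u : R × R) : u = u.1 • (1, 0) + u.2 • (0, 1) := by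
  ext <;> simp

theorem LinearMap.apply_eq_fst_smul_add_snd_smul (f : R × R →ₗ[R] M) (u : R × R) :
    f u = u.1 • f (1, 0) + u.2 • f (0, 1) := by
  conv_lhs => rw [u.eq_fst_smul_add_snd_smul_s4]
  rw [map_add, map_smul, map_smul]

theorem LinearMap.apply₂_eq_sum_smul (B : R × R →ₗ[R] R × R →ₗ[R] M) (u v : R × R) :
    B u v = (u.1 * v.1) • B (1, 0) (1, 0) + (u.1 * v.2) • B (1, 0) (0, 1) +
      ((u.2 * v.1) • B (0, 1) (1, 0) + (u.2 * v.2) • B (0, 1) (0, 1)) := by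
  rw [B.apply_eq_fst_smul_add_snd_smul u, LinearMap.add_apply, LinearMap.smul_apply,
    LinearMap.smul_apply, (B _).apply_eq_fst_smul_add_snd_smul v,
    (B _).apply_eq_fst_smul_add_snd_smul v]
  simp only [smul_add, smul_smul, mul_comm]

end Coordinates

section Averaging

variable {R M : Type*} [CommSemiring R] [AddCommMonoid M] [Module R M]

def IsAveraging (μ : M →ₗ[R] M →ₗ[R] M) (P : M →ₗ[R] M) : Prop :=
  ∀ u v, μ (P u) (P v) = P (μ u (P v)) ∧ μ (P u) (P v) = P (μ (P u) v)

theorem isAveraging_and_isAveraging_iff (l r : M →ₗ[R] M →ₗ[R] M) (P : M →ₗ[R] M) :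
    IsAveraging l P ∧ IsAveraging r P ↔ ∀ u v,
      l (P u) (P v) = P (l u (P v)) ∧ l (P u) (P v) = P (l (P u) v) ∧
        r (P u) (P v) = P (r u (P v)) ∧ r (P u) (P v) = P (r (P u) v) := by
  simp only [IsAveraging, ← forall_and, and_assoc]

end Averaging

section Dendriform

variable {R : Type*} [CommRing R] [NoZeroDivisors R]

theorem isAveraging_dend_iff (l r : R × R →ₗ[R] R × R →ₗ[R] R × R) (P : R × R →ₗ[R] R × R)
    (hl : ∀ u v, l u v = (u.1 * v.1, 0)) (hr : ∀ u v, r u v = (0, u.1 * v.2))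
    {a b c d : R} (hP₁ : P (1, 0) = (a, b)) (hP₂ : P (0, 1) = (c, d)) :
    IsAveraging l P ∧ IsAveraging r P ↔
      c = 0 ∧ a * b = 0 ∧ b * d = 0 ∧ (a - d) * d = 0 := by
  have hP : ∀ u, P u = (u.1 * a + u.2 * c, u.1 * b + u.2 * d) := fun u => by
    rw [P.apply_eq_fst_smul_add_snd_smul u, hP₁, hP₂]
    ext <;> simp
  simp only [IsAveraging, hl, hr, hP, Prod.ext_iff]
  constructor
  · rintro ⟨hL, hR⟩
    have hc : c = 0 := mul_self_eq_zero.mp (by linear_combination (hL (0, 1) (0, 1)).1.1)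
    subst hc
    have hab : a * b = 0 := by linear_combination -(hL (1, 0) (1, 0)).1.2
    refine ⟨rfl, hab, ?_, ?_⟩
    · linear_combination hab - (hR (1, 0) (1, 0)).1.2
    · linear_combination (hR (1, 0) (0, 1)).1.2
  · rintro ⟨rfl, hab, hbd, had⟩
    refine ⟨fun u v => ⟨⟨?_, ?_⟩, ?_, ?_⟩, fun u v => ⟨⟨?_, ?_⟩, ?_, ?_⟩⟩
    all_goals grind

theorem dend_coeffs_iff {a b c d : R} :
    c = 0 ∧ a * b = 0 ∧ b * d = 0 ∧ (a - d) * d = 0 ↔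
      (a = 0 ∧ c = 0 ∧ d = 0) ∨ (b = 0 ∧ c = 0 ∧ d = 0) ∨ (b = 0 ∧ c = 0 ∧ d = a) := by
  constructor
  · rintro ⟨hc, hab, hbd, had⟩
    by_cases hb : b = 0
    · rcases mul_eq_zero.mp had with had | hd
      · exact .inr (.inr ⟨hb, hc, (sub_eq_zero.mp had).symm⟩)
      · exact .inr (.inl ⟨hb, hc, hd⟩)
    · exact .inl ⟨(mul_eq_zero.mp hab).resolve_right hb, hc, (mul_eq_zero.mp hbd).resolve_left hb⟩
  · rintro (⟨rfl, rfl, rfl⟩ | ⟨rfl, rfl, rfl⟩ | ⟨rfl, rfl, rfl⟩) <;> simp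

end Dendriform

theorem stmt_4
    (l r : (ℂ × ℂ) →ₗ[ℂ] (ℂ × ℂ) →ₗ[ℂ] (ℂ × ℂ))
    (P : (ℂ × ℂ) →ₗ[ℂ] (ℂ × ℂ))
    (e₁ e₂ : ℂ × ℂ)
    (he₁ : e₁ = (1, 0)) (he₂ : e₂ = (0, 1))
    (hl11 : l e₁ e₁ = e₁)
    (hl12 : l e₁ e₂ = 0)
    (hl21 : l e₂ e₁ = 0)
    (hl22 : l e₂ e₂ = 0)
    (hr11 : r e₁ e₁ = 0)
    (hr12 : r e₁ e₂ = e₂)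
    (hr21 : r e₂ e₁ = 0)
    (hr22 : r e₂ e₂ = 0) :
    (∀ u v : ℂ × ℂ,
        l (P u) (P v) = P (l u (P v)) ∧ l (P u) (P v) = P (l (P u) v) ∧
        r (P u) (P v) = P (r u (P v)) ∧ r (P u) (P v) = P (r (P u) v)) ↔
      ((∃ t : ℂ, P e₁ = t • e₂ ∧ P e₂ = 0) ∨ (∃ t : ℂ, P e₁ = t • e₁ ∧ P e₂ = 0) ∨ (∃ t : ℂ, P e₁ = t • e₁ ∧ P e₂ = t • e₂)) := by
  subst he₁ he₂
  have hl : ∀ u v, l u v = (u.1 * v.1, 0) := fun u v => by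
    rw [l.apply₂_eq_sum_smul, hl11, hl12, hl21, hl22]
    ext <;> simp
  have hr : ∀ u v, r u v = (0, u.1 * v.2) := fun u v => by
    rw [r.apply₂_eq_sum_smul, hr11, hr12, hr21, hr22]
    ext <;> simp
  obtain ⟨⟨a, b⟩, hP₁⟩ : ∃ x, P (1, 0) = x := ⟨_, rfl⟩
  obtain ⟨⟨c, d⟩, hP₂⟩ : ∃ y, P (0, 1) = y := ⟨_, rfl⟩
  rw [← isAveraging_and_isAveraging_iff, isAveraging_dend_iff l r P hl hr hP₁ hP₂, dend_coeffs_iff, hP₁, hP₂]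
  simp [Prod.ext_iff, and_assoc]
end

section
/- Fix α ∈ ℂ. Let E = ℂ² with basis e₁, e₂, equipped with the dendriform algebra structure Dend₂²(α) given by the bilinear operations ≺, ≻ determined on basis elements by e₁ ≺ e₁ = e₂ and e₁ ≻ e₁ = α·e₂ (all other products of basis elements are 0). A linear operator P : E → E is a Rota–Baxter operator of weight 0 on (E, ≺, ≻) if and only if there exist b, d ∈ ℂ such that either (i) P(e₁) = b·e₂ and P(e₂) = d·e₂, or (ii) P(e₁) = 2d·e₁ + b·e₂ and P(e₂) = d·e₂. -/
/-!
Since `≻ = α • ≺` and the weight-zero Rota–Baxter identity survives scaling the product, only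
the rank-one product `u ≺ v = u₁ v₁ e₂` matters. Writing `P e₁ = (a, b)` and `P e₂ = (c, d)`,
the identity tested on `(e₁, e₂)` gives `c² = 0` and on `(e₁, e₁)` gives `a² = 2ad`; conversely,
once `c = 0` both sides of the identity are multiples of `u₁ v₁`, and they agree iff `a² = 2ad`.
-/

section RotaBaxter

variable {R M : Type*} [CommSemiring R] [AddCommMonoid M] [Module R M]

def IsRotaBaxterOfWeightZero (μ : M →ₗ[R] M →ₗ[R] M) (P : M →ₗ[R] M) : Prop :=
  ∀ u v, μ (P u) (P v) = P (μ (P u) v + μ u (P v))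

theorem IsRotaBaxterOfWeightZero.smul {μ : M →ₗ[R] M →ₗ[R] M} {P : M →ₗ[R] M}
    (h : IsRotaBaxterOfWeightZero μ P) (k : R) : IsRotaBaxterOfWeightZero (k • μ) P :=
  fun u v => by simp only [LinearMap.smul_apply, ← smul_add, map_smul, h u v]

end RotaBaxter

namespace Prod

variable {R : Type*} [CommRing R]

theorem eq_fst_smul_add_snd_smul_s5 (u : R × R) :
    u = u.1 • ((1 : R), (0 : R)) + u.2 • (0, 1) := by
  ext <;> simp

variable {M : Type*} [AddCommMonoid M] [Module R M]

theorem linearMap_apply_eq (P : R × R →ₗ[R] M) (u : R × R) :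
    P u = u.1 • P (1, 0) + u.2 • P (0, 1) := by
  conv_lhs => rw [eq_fst_smul_add_snd_smul_s5 u]
  simp only [map_add, map_smul]

theorem bilinear_apply_eq_of_basis (B : R × R →ₗ[R] R × R →ₗ[R] M) {w : M}
    (h11 : B (1, 0) (1, 0) = w) (h12 : B (1, 0) (0, 1) = 0)
    (h21 : B (0, 1) (1, 0) = 0) (h22 : B (0, 1) (0, 1) = 0) (u v : R × R) :
    B u v = (u.1 * v.1) • w := by
  rw [linearMap_apply_eq B, LinearMap.add_apply, LinearMap.smul_apply, LinearMap.smul_apply,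
    linearMap_apply_eq (B (1, 0)), linearMap_apply_eq (B (0, 1))]
  simp only [h11, h12, h21, h22, smul_zero, add_zero, smul_smul]

end Prod

theorem isRotaBaxterOfWeightZero_iff_of_rankOne {R : Type*} [CommRing R] [NoZeroDivisors R]
    {μ : R × R →ₗ[R] R × R →ₗ[R] R × R}
    (hμ : ∀ u v, μ u v = (u.1 * v.1) • ((0 : R), (1 : R)))
    (P : R × R →ₗ[R] R × R) :
    IsRotaBaxterOfWeightZero μ P ↔
      (P (0, 1)).1 = 0 ∧ (P (1, 0)).1 * (P (1, 0)).1 = 2 * (P (1, 0)).1 * (P (0, 1)).2 := by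
  constructor
  · intro h
    have hc := congrArg Prod.fst (h (1, 0) (0, 1))
    have hd := congrArg Prod.snd (h (1, 0) (1, 0))
    simp only [hμ, ← add_smul, map_smul, Prod.smul_fst, Prod.smul_snd, smul_eq_mul, mul_zero,
      mul_one, zero_add, one_mul] at hc hd
    exact ⟨mul_self_eq_zero.mp hc.symm, by linear_combination hd⟩
  · rintro ⟨hc, had⟩ u v
    have hPfst : ∀ w, (P w).1 = w.1 * (P (1, 0)).1 := fun w => by
      rw [Prod.linearMap_apply_eq P w]
      simp [hc]
    have hPe₂ : P (0, 1) = (0, (P (0, 1)).2) := Prod.ext hc rfl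
    rw [hμ, hμ, hμ, ← add_smul, map_smul, hPfst u, hPfst v, hPe₂]
    ext
    · simp
    · simp only [Prod.smul_snd, smul_eq_mul]
      linear_combination u.1 * v.1 * had

theorem fst_eq_zero_and_mul_self_eq_iff_exists {R : Type*} [CommRing R] [NoZeroDivisors R]
    (x y : R × R) :
    (y.1 = 0 ∧ x.1 * x.1 = 2 * x.1 * y.2) ↔
      ∃ b d : R, (x = b • (0, 1) ∧ y = d • (0, 1)) ∨
        (x = (2 * d) • (1, 0) + b • (0, 1) ∧ y = d • (0, 1)) := by
  constructor
  · rintro ⟨hy, hx⟩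
    have hy' : y = y.2 • (0, 1) := Prod.ext (by simp [hy]) (by simp)
    have hx₁ : x.1 = 0 ∨ x.1 = 2 * y.2 :=
      (mul_eq_zero.mp (by linear_combination hx : x.1 * (x.1 - 2 * y.2) = 0)).imp id
        sub_eq_zero.mp
    refine ⟨x.2, y.2, hx₁.imp (fun h => ⟨Prod.ext ?_ ?_, hy'⟩)
      (fun h => ⟨Prod.ext ?_ ?_, hy'⟩)⟩ <;> simp [h]
  · rintro ⟨b, d, ⟨rfl, rfl⟩ | ⟨rfl, rfl⟩⟩ <;> simp; ring

theorem stmt_5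
    (α : ℂ)
    (l r : (ℂ × ℂ) →ₗ[ℂ] (ℂ × ℂ) →ₗ[ℂ] (ℂ × ℂ))
    (P : (ℂ × ℂ) →ₗ[ℂ] (ℂ × ℂ))
    (e₁ e₂ : ℂ × ℂ)
    (he₁ : e₁ = (1, 0)) (he₂ : e₂ = (0, 1))
    (hl11 : l e₁ e₁ = e₂)
    (hl12 : l e₁ e₂ = 0)
    (hl21 : l e₂ e₁ = 0)
    (hl22 : l e₂ e₂ = 0)
    (hr11 : r e₁ e₁ = α • e₂)
    (hr12 : r e₁ e₂ = 0)
    (hr21 : r e₂ e₁ = 0)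
    (hr22 : r e₂ e₂ = 0) :
    (∀ u v : ℂ × ℂ,
        l (P u) (P v) = P (l (P u) v + l u (P v) + (0:ℂ) • l u v) ∧
        r (P u) (P v) = P (r (P u) v + r u (P v) + (0:ℂ) • l u v)) ↔
      (∃ b d : ℂ, (P e₁ = b • e₂ ∧ P e₂ = d • e₂) ∨ (P e₁ = (2 * d) • e₁ + b • e₂ ∧ P e₂ = d • e₂)) := by
  subst he₁ he₂
  have hl := Prod.bilinear_apply_eq_of_basis l hl11 hl12 hl21 hl22
  have hr : r = α • l := LinearMap.ext₂ fun u v => by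
    rw [Prod.bilinear_apply_eq_of_basis r hr11 hr12 hr21 hr22, LinearMap.smul_apply,
      LinearMap.smul_apply, hl, smul_comm]
  have hr_of_hl : IsRotaBaxterOfWeightZero l P → IsRotaBaxterOfWeightZero r P :=
    fun h => hr ▸ h.smul α
  simp only [zero_smul, add_zero, forall_and]
  rw [← IsRotaBaxterOfWeightZero, ← IsRotaBaxterOfWeightZero, and_iff_left_of_imp hr_of_hl,
    isRotaBaxterOfWeightZero_iff_of_rankOne hl, fst_eq_zero_and_mul_self_eq_iff_exists]
end

section
/- Let E = ℂ² with basis e₁, e₂, equipped with the dendriform algebra structure Dend₂⁷ given by the bilinear operations ≺, ≻ determined on basis elements by e₁ ≺ e₂ = −e₂, e₂ ≺ e₂ = e₂, e₁ ≻ e₁ = e₁, e₁ ≻ e₂ = e₂ (all other products of basis elements are 0). A linear operator P : E → E is a Rota–Baxter operator of weight 1 on (E, ≺, ≻) if and only if P = 0. -/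
/-! The basis values force `u ≻ v = u₁ • v` and `u ≺ v = (0, (u₂ - u₁) v₂)`. For a Rota–Baxter
operator of weight 1, the `≻`-identity at `(e₂, e₂)` reads `c • Pe₂ = (c + 1) • Pe₂` with
`c = (Pe₂)₁`, so `Pe₂ = 0`. At `(e₁, e₁)` it then reads `a • Pe₁ = 2a • Pe₁` with `a = (Pe₁)₁`, so `a² = 0`, and the
`≺`-identity at `(e₁, e₁)` becomes `((Pe₁)₂)² = 0`. -/

def IsRotaBaxter {R A : Type*} [CommSemiring R] [AddCommMonoid A] [Module R A]
    (l r : A →ₗ[R] A →ₗ[R] A) (w : R) (P : A →ₗ[R] A) : Prop :=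
  ∀ u v : A,
    l (P u) (P v) = P (l (P u) v + l u (P v) + w • l u v) ∧
    r (P u) (P v) = P (r (P u) v + r u (P v) + w • l u v)

theorem isRotaBaxter_zero {R A : Type*} [CommSemiring R] [AddCommMonoid A] [Module R A]
    (l r : A →ₗ[R] A →ₗ[R] A) (w : R) : IsRotaBaxter l r w 0 := by
  intro u v
  simp

section Plane

variable {R M : Type*} [CommSemiring R] [AddCommMonoid M] [Module R M]

theorem Prod.fst_smul_add_snd_smul (x : R × R) : x.1 • ((1, 0) : R × R) + x.2 • (0, 1) = x := by
  ext <;> simp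

theorem LinearMap.apply_prod_eq_s13 (f : (R × R) →ₗ[R] M) (x : R × R) :
    f x = x.1 • f (1, 0) + x.2 • f (0, 1) := by
  conv_lhs => rw [← x.fst_smul_add_snd_smul]
  simp only [map_add, map_smul]

theorem LinearMap.apply₂_prod_eq (B : (R × R) →ₗ[R] (R × R) →ₗ[R] M) (x y : R × R) :
    B x y = (x.1 * y.1) • B (1, 0) (1, 0) + (x.1 * y.2) • B (1, 0) (0, 1)
      + (x.2 * y.1) • B (0, 1) (1, 0) + (x.2 * y.2) • B (0, 1) (0, 1) := by
  rw [B.apply_prod_eq_s13 x, LinearMap.add_apply, LinearMap.smul_apply, LinearMap.smul_apply,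
    (B (1, 0)).apply_prod_eq_s13 y, (B (0, 1)).apply_prod_eq_s13 y]
  simp only [smul_add, smul_smul, mul_comm x.1, mul_comm x.2]
  abel

end Plane

section Dend27

variable {K : Type*} [CommRing K]
  {l r : (K × K) →ₗ[K] (K × K) →ₗ[K] (K × K)} {P : (K × K) →ₗ[K] (K × K)}

theorem IsRotaBaxter.apply_zero_one_eq_zero (hr : ∀ x y, r x y = x.1 • y)
    (hl : ∀ x y, l x y = (0, (x.2 - x.1) * y.2)) (hP : IsRotaBaxter l r 1 P) :
    P (0, 1) = 0 := by
  have h := (hP (0, 1) (0, 1)).2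
  simp only [hr, hl, one_smul, sub_zero, mul_one, map_add, map_smul] at h
  linear_combination (norm := module) -h

theorem IsRotaBaxter.apply_one_zero_eq_zero [NoZeroDivisors K] (hr : ∀ x y, r x y = x.1 • y)
    (hl : ∀ x y, l x y = (0, (x.2 - x.1) * y.2)) (hP : IsRotaBaxter l r 1 P) :
    P (1, 0) = 0 := by
  have hP₂ : ∀ t : K, P (0, t) = 0 := fun t => by
    rw [P.apply_prod_eq_s13, hP.apply_zero_one_eq_zero hr hl]
    simp
  have hPP : P (P (1, 0)) = (P (1, 0)).1 • P (1, 0) := by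
    rw [P.apply_prod_eq_s13 (P (1, 0)), hP₂, smul_zero, add_zero]
  obtain ⟨hl₁, hr₁⟩ := hP (1, 0) (1, 0)
  simp only [hr, hl, one_smul, map_add, map_smul, hPP, hP₂, add_zero] at hl₁ hr₁
  set p := P (1, 0)
  have ha : p.1 = 0 := mul_self_eq_zero.mp (by simpa using congr_arg Prod.fst hr₁)
  have hb : p.2 = 0 := mul_self_eq_zero.mp (by simpa [ha] using congr_arg Prod.snd hl₁)
  exact Prod.ext ha hb

theorem IsRotaBaxter.eq_zero_of_dend27 [NoZeroDivisors K] (hr : ∀ x y, r x y = x.1 • y)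
    (hl : ∀ x y, l x y = (0, (x.2 - x.1) * y.2)) (hP : IsRotaBaxter l r 1 P) : P = 0 :=
  LinearMap.ext fun x => by
    rw [P.apply_prod_eq_s13, hP.apply_one_zero_eq_zero hr hl, hP.apply_zero_one_eq_zero hr hl]
    simp

end Dend27

theorem stmt_13
    (l r : (ℂ × ℂ) →ₗ[ℂ] (ℂ × ℂ) →ₗ[ℂ] (ℂ × ℂ))
    (P : (ℂ × ℂ) →ₗ[ℂ] (ℂ × ℂ))
    (e₁ e₂ : ℂ × ℂ)
    (he₁ : e₁ = (1, 0)) (he₂ : e₂ = (0, 1))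
    (hl11 : l e₁ e₁ = 0)
    (hl12 : l e₁ e₂ = -e₂)
    (hl21 : l e₂ e₁ = 0)
    (hl22 : l e₂ e₂ = e₂)
    (hr11 : r e₁ e₁ = e₁)
    (hr12 : r e₁ e₂ = e₂)
    (hr21 : r e₂ e₁ = 0)
    (hr22 : r e₂ e₂ = 0) :
    (∀ u v : ℂ × ℂ,
        l (P u) (P v) = P (l (P u) v + l u (P v) + (1:ℂ) • l u v) ∧
        r (P u) (P v) = P (r (P u) v + r u (P v) + (1:ℂ) • l u v)) ↔
      (P = 0) := by
  subst he₁ he₂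
  have hr : ∀ x y, r x y = x.1 • y := fun x y => by
    rw [r.apply₂_prod_eq, hr11, hr12, hr21, hr22]
    ext <;> simp
  have hl : ∀ x y, l x y = (0, (x.2 - x.1) * y.2) := fun x y => by
    rw [l.apply₂_prod_eq, hl11, hl12, hl21, hl22]
    ext <;> simp [sub_mul, neg_add_eq_sub]
  exact ⟨fun h => IsRotaBaxter.eq_zero_of_dend27 hr hl h, fun h => h ▸ isRotaBaxter_zero l r 1⟩
end

section
/- Let E = ℂ² with basis e₁, e₂, equipped with the dendriform algebra structure Dend₂⁶ given by the bilinear operations ≺, ≻ determined on basis elements by e₁ ≺ e₁ = e₁ and e₂ ≻ e₂ = e₂ (all other products of basis elements are 0). A linear operator P : E → E is an averaging operator on (E, ≺, ≻) if and only if there exist a, d ∈ ℂ such that P(e₁) = a·e₁ and P(e₂) = d·e₂. -/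
/-!
In Dend₂⁶ both products are coordinatewise multiplication followed by a projection:
`x ≺ y = (x₁ y₁, 0)` and `x ≻ y = (0, x₂ y₂)`. Taking `u = v = e₁` in
`P u ≻ P v = P (u ≻ P v)` gives `(P e₁)₂ ^ 2 = 0`, and symmetrically `(P e₂)₁ ^ 2 = 0`, so a
reduced scalar ring forces `P` to be diagonal; a diagonal `P` commutes with both products
coordinatewise.
-/

open LinearMap

variable {R : Type*} [CommSemiring R]

def IsAveragingOperator {M : Type*} [AddCommMonoid M] [Module R M]
    (μ : M →ₗ[R] M →ₗ[R] M) (P : M →ₗ[R] M) : Prop :=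
  ∀ u v, μ (P u) (P v) = P (μ u (P v)) ∧ μ (P u) (P v) = P (μ (P u) v)

variable (R) in
def fstMul : (R × R) →ₗ[R] (R × R) →ₗ[R] (R × R) :=
  mk₂ R (fun x y => (x.1 * y.1, 0))
    (fun _ _ _ => by ext <;> simp [add_mul]) (fun _ _ _ => by ext <;> simp [mul_assoc])
    (fun _ _ _ => by ext <;> simp [mul_add]) (fun _ _ _ => by ext <;> simp [mul_left_comm])

variable (R) in
def sndMul : (R × R) →ₗ[R] (R × R) →ₗ[R] (R × R) :=
  mk₂ R (fun x y => (0, x.2 * y.2))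
    (fun _ _ _ => by ext <;> simp [add_mul]) (fun _ _ _ => by ext <;> simp [mul_assoc])
    (fun _ _ _ => by ext <;> simp [mul_add]) (fun _ _ _ => by ext <;> simp [mul_left_comm])

@[simp] lemma fstMul_apply (x y : R × R) : fstMul R x y = (x.1 * y.1, 0) := rfl

@[simp] lemma sndMul_apply (x y : R × R) : sndMul R x y = (0, x.2 * y.2) := rfl

lemma eq_fstMul {μ : (R × R) →ₗ[R] (R × R) →ₗ[R] (R × R)}
    (h11 : μ (1, 0) (1, 0) = (1, 0)) (h12 : μ (1, 0) (0, 1) = 0)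
    (h21 : μ (0, 1) (1, 0) = 0) (h22 : μ (0, 1) (0, 1) = 0) : μ = fstMul R := by
  refine ext_basis (Module.Basis.finTwoProd R) (Module.Basis.finTwoProd R) fun i j => ?_
  fin_cases i <;> fin_cases j <;> simp [h11, h12, h21, h22, Prod.mk_zero_zero]

lemma eq_sndMul {μ : (R × R) →ₗ[R] (R × R) →ₗ[R] (R × R)}
    (h11 : μ (1, 0) (1, 0) = 0) (h12 : μ (1, 0) (0, 1) = 0)
    (h21 : μ (0, 1) (1, 0) = 0) (h22 : μ (0, 1) (0, 1) = (0, 1)) : μ = sndMul R := by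
  refine ext_basis (Module.Basis.finTwoProd R) (Module.Basis.finTwoProd R) fun i j => ?_
  fin_cases i <;> fin_cases j <;> simp [h11, h12, h21, h22, Prod.mk_zero_zero]

lemma IsAveragingOperator.fst_apply_inr [IsReduced R] {P : (R × R) →ₗ[R] (R × R)}
    (hP : IsAveragingOperator (fstMul R) P) : (P (0, 1)).1 = 0 := by
  have h := congr_arg Prod.fst (hP (0, 1) (0, 1)).1
  simp only [fstMul_apply, zero_mul, Prod.mk_zero_zero, map_zero, Prod.fst_zero] at h
  exact IsReduced.eq_zero _ ⟨2, by rw [sq, h]⟩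

lemma IsAveragingOperator.snd_apply_inl [IsReduced R] {P : (R × R) →ₗ[R] (R × R)}
    (hP : IsAveragingOperator (sndMul R) P) : (P (1, 0)).2 = 0 := by
  have h := congr_arg Prod.snd (hP (1, 0) (1, 0)).1
  simp only [sndMul_apply, zero_mul, Prod.mk_zero_zero, map_zero, Prod.snd_zero] at h
  exact IsReduced.eq_zero _ ⟨2, by rw [sq, h]⟩

lemma apply_eq_of_apply_eq_smul {P : (R × R) →ₗ[R] (R × R)} {a d : R}
    (h₁ : P (1, 0) = a • (1, 0)) (h₂ : P (0, 1) = d • (0, 1)) (x : R × R) :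
    P x = (a * x.1, d * x.2) := by
  have hx : x = x.1 • ((1 : R), (0 : R)) + x.2 • ((0 : R), (1 : R)) := by ext <;> simp
  rw [hx, map_add, map_smul, map_smul, h₁, h₂]
  ext <;> simp [mul_comm]

lemma isAveragingOperator_fstMul_and_sndMul_iff [IsReduced R] (P : (R × R) →ₗ[R] (R × R)) :
    IsAveragingOperator (fstMul R) P ∧ IsAveragingOperator (sndMul R) P ↔
      ∃ a d : R, P (1, 0) = a • (1, 0) ∧ P (0, 1) = d • (0, 1) := by
  constructor
  · rintro ⟨hfst, hsnd⟩
    refine ⟨(P (1, 0)).1, (P (0, 1)).2, ?_, ?_⟩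
    · ext <;> simp [hsnd.snd_apply_inl]
    · ext <;> simp [hfst.fst_apply_inr]
  · rintro ⟨a, d, h₁, h₂⟩
    simp only [IsAveragingOperator, apply_eq_of_apply_eq_smul h₁ h₂, fstMul_apply, sndMul_apply]
    refine ⟨fun u v => ⟨?_, ?_⟩, fun u v => ⟨?_, ?_⟩⟩ <;> ext <;> simp <;> ring

theorem stmt_18
    (l r : (ℂ × ℂ) →ₗ[ℂ] (ℂ × ℂ) →ₗ[ℂ] (ℂ × ℂ))
    (P : (ℂ × ℂ) →ₗ[ℂ] (ℂ × ℂ))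
    (e₁ e₂ : ℂ × ℂ)
    (he₁ : e₁ = (1, 0)) (he₂ : e₂ = (0, 1))
    (hl11 : l e₁ e₁ = e₁)
    (hl12 : l e₁ e₂ = 0)
    (hl21 : l e₂ e₁ = 0)
    (hl22 : l e₂ e₂ = 0)
    (hr11 : r e₁ e₁ = 0)
    (hr12 : r e₁ e₂ = 0)
    (hr21 : r e₂ e₁ = 0)
    (hr22 : r e₂ e₂ = e₂) :
    (∀ u v : ℂ × ℂ,
        l (P u) (P v) = P (l u (P v)) ∧ l (P u) (P v) = P (l (P u) v) ∧
        r (P u) (P v) = P (r u (P v)) ∧ r (P u) (P v) = P (r (P u) v)) ↔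
      (∃ a d : ℂ, P e₁ = a • e₁ ∧ P e₂ = d • e₂) := by
  subst he₁ he₂
  obtain rfl : l = fstMul ℂ := eq_fstMul hl11 hl12 hl21 hl22
  obtain rfl : r = sndMul ℂ := eq_sndMul hr11 hr12 hr21 hr22
  rw [← isAveragingOperator_fstMul_and_sndMul_iff]
  simp only [IsAveragingOperator, ← forall_and, and_assoc]
end
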